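/- Let N ≥ 1 and K ≥ 1 be integers and define the base down-chirp s_d[n] = exp( −2πi·( n²/(2NK²) − n/(2K) ) ) for n = 0,…,NK−1. For every integer m with 1 ≤ m ≤ NK−1, the autocorrelation magnitude satisfies (1/(NK)) · | Σ_{n=0}^{NK−m−1} conj(s_d[n]) · s_d[n+m] | = (1/(NK)) · | sin( (π·m/(NK²)) · (NK − m) ) / sin( π·m/(NK²) ) |. -/

import Mathlib

/-!
The quadratic parts of the phases of `conj (s_d[n])` and `s_d[n + m]` cancel, so their product
is a constant of modulus one times `exp (-2 i a n)` with `a = π m / (N K²)`. The autocorrelation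
is therefore a geometric sum, whose modulus `|e^{-2iaL} - 1| / |e^{-2ia} - 1|` is
`|sin (L a) / sin a|`; since `0 < a < π` when `0 < m < N K`, the denominator does not vanish.
-/

open Real Complex Finset

/-- The base down-chirp with chip number `N`, oversampling factor `K`, and `NK` samples:
`s_d[n] = exp(-2πi (n²/(2NK²) - n/(2K)))`. -/
noncomputable def baseDownChirp (N K n : ℕ) : ℂ :=
  Complex.exp (-(2 * Real.pi * Complex.I) *
    ((n : ℂ) ^ 2 / (2 * (N : ℂ) * (K : ℂ) ^ 2) - (n : ℂ) / (2 * (K : ℂ))))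

theorem norm_sum_range_exp_I_mul_two_mul (θ : ℝ) (hθ : Real.sin θ ≠ 0) (L : ℕ) :
    ‖∑ n ∈ range L, exp (I * (2 * n * θ : ℝ))‖ = |Real.sin (L * θ) / Real.sin θ| := by
  have hpow (k : ℕ) : exp (I * (2 * k * θ : ℝ)) = exp (I * (2 * θ : ℝ)) ^ k := by
    rw [← Complex.exp_nat_mul]; push_cast; ring_nf
  have hsub (k : ℕ) : ‖exp (I * (2 * θ : ℝ)) ^ k - 1‖ = 2 * |Real.sin (k * θ)| := by
    rw [← hpow, norm_exp_I_mul_ofReal_sub_one, norm_mul, Real.norm_eq_abs, Real.norm_eq_abs,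
      abs_two]
    ring_nf
  have hsub_one : ‖exp (I * (2 * θ : ℝ)) - 1‖ = 2 * |Real.sin θ| := by simpa using hsub 1
  have hne : exp (I * (2 * θ : ℝ)) ≠ 1 := by
    intro h
    rw [h, sub_self, norm_zero] at hsub_one
    exact hθ (abs_eq_zero.1 (by linarith))
  simp_rw [hpow]
  rw [geom_sum_eq hne, norm_div, hsub, hsub_one, abs_div, mul_div_mul_left _ _ two_ne_zero]

theorem conj_baseDownChirp_mul_baseDownChirp_add (N K n m : ℕ) :
    starRingEnd ℂ (baseDownChirp N K n) * baseDownChirp N K (n + m) =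
      exp (I * (π * m / K - π * m ^ 2 / (N * K ^ 2) : ℝ)) *
        exp (I * (2 * n * -(π * m / (N * K ^ 2)) : ℝ)) := by
  rw [baseDownChirp, baseDownChirp, ← exp_conj, ← Complex.exp_add, ← Complex.exp_add]
  congr 1
  simp only [map_mul, map_neg, map_sub, map_div₀, map_pow, map_ofNat, map_natCast, conj_ofReal,
    conj_I]
  push_cast
  ring

theorem sin_pi_mul_div_mul_sq_pos (N K m : ℕ) (hm0 : 0 < m) (hm : m < N * K) :
    0 < Real.sin (π * m / (N * K ^ 2)) := by
  have hK : (1 : ℝ) ≤ K := by exact_mod_cast Nat.one_le_iff_ne_zero.2 (by rintro rfl; simp at hm)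
  have hm0' : (0 : ℝ) < m := by exact_mod_cast hm0
  have hmK : (m : ℝ) < N * K ^ 2 := by
    refine lt_of_lt_of_le (b := (N * K : ℝ)) (by exact_mod_cast hm) ?_
    rw [sq, ← mul_assoc]
    exact le_mul_of_one_le_right (by positivity) hK
  apply Real.sin_pos_of_pos_of_lt_pi
  · have : (0 : ℝ) < N * K ^ 2 := hm0'.trans hmK
    positivity
  · rw [div_lt_iff₀ (hm0'.trans hmK)]
    nlinarith [Real.pi_pos]

theorem downchirp_autocorrelation_general (N K : ℕ)
    (m : ℕ) (hm1 : 1 ≤ m) (hm2 : m ≤ N * K - 1) :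
    (1 / ((N : ℝ) * K)) *
      ‖∑ n ∈ Finset.range (N * K - m),
        (starRingEnd ℂ) (baseDownChirp N K n) * baseDownChirp N K (n + m)‖ =
    (1 / ((N : ℝ) * K)) *
      |Real.sin ((Real.pi * m / ((N : ℝ) * K ^ 2)) * ((N : ℝ) * K - m)) /
        Real.sin (Real.pi * m / ((N : ℝ) * K ^ 2))| := by
  have hm : m < N * K := by omega
  have hsin := sin_pi_mul_div_mul_sq_pos N K m hm1 hm
  simp_rw [conj_baseDownChirp_mul_baseDownChirp_add, ← mul_sum]
  rw [norm_mul, norm_exp_I_mul_ofReal, one_mul,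
    norm_sum_range_exp_I_mul_two_mul _ (by rw [Real.sin_neg]; exact neg_ne_zero.2 hsin.ne'),
    mul_neg, Real.sin_neg, Real.sin_neg, neg_div_neg_eq, Nat.cast_sub hm.le, Nat.cast_mul,
    mul_comm ((N : ℝ) * K - m)]

/-- Autocorrelation magnitude of the base down-chirp at timing lag `m`,
`1 ≤ m ≤ NK - 1`:
`(1/(NK)) |Σ_{n=0}^{NK-m-1} conj(s_d[n]) s_d[n+m]|
  = (1/(NK)) |sin((πm/(NK²))(NK - m)) / sin(πm/(NK²))|`. -/
theorem downchirp_autocorrelation (N K : ℕ) (hN : 1 ≤ N) (hK : 1 ≤ K)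
    (m : ℕ) (hm1 : 1 ≤ m) (hm2 : m ≤ N * K - 1) :
    (1 / ((N : ℝ) * K)) *
      ‖∑ n ∈ Finset.range (N * K - m),
        (starRingEnd ℂ) (baseDownChirp N K n) * baseDownChirp N K (n + m)‖ =
    (1 / ((N : ℝ) * K)) *
      |Real.sin ((Real.pi * m / ((N : ℝ) * K ^ 2)) * ((N : ℝ) * K - m)) /
        Real.sin (Real.pi * m / ((N : ℝ) * K ^ 2))| :=
  downchirp_autocorrelation_general N K m hm1 hm2
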